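/- arXiv:1707.00106 — 5 statements merged into one kernel-verified Lean document; each statement's English description precedes it below -/
import Mathlib

section
/- Let G be a connected graph whose edge-vertex incidence matrix has the consecutive ones property for rows. Then G is a path. -/
/-- A binary matrix `M` has the consecutive ones property for rows if the columns
can be linearly ordered so that the ones in every row are consecutive. -/
def HasC1PRows {α β : Type*} (M : α → β → Bool) : Prop :=
  ∃ f : β → ℕ, Function.Injective f ∧
    ∀ (i : α) (j1 j2 j3 : β), f j1 < f j2 → f j2 < f j3 →
      M i j1 = true → M i j3 = true → M i j2 = true

/-- If `G` is connected and its edge-vertex incidence matrix has the consecutive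
ones property for rows, then `G` is a path: it has a Hamiltonian path and exactly
`|V| - 1` edges. -/
theorem path_of_incidence_c1p {V : Type*} [Fintype V] [DecidableEq V]
    (G : SimpleGraph V) [DecidableRel G.Adj] (hconn : G.Connected)
    (hC1P : HasC1PRows (fun (e : G.edgeSet) (v : V) => decide (v ∈ (e : Sym2 V)))) :
    (∃ (a b : V) (p : G.Walk a b), p.IsHamiltonian) ∧
      G.edgeFinset.card = Fintype.card V - 1 := by
  classical
  obtain ⟨f, hf, hC⟩ := hC1P
  letI : LinearOrder V := LinearOrder.lift' f hf
  have hle : ∀ a b : V, a ≤ b ↔ f a ≤ f b := fun a b => Iff.rfl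
  have hlt : ∀ a b : V, a < b ↔ f a < f b := by
    intro a b; rw [lt_iff_le_not_ge, hle, hle, ← lt_iff_le_not_ge]
  -- no vertex strictly between endpoints of an edge
  have hbetween : ∀ a b c : V, G.Adj a b → a < c → c < b → False := by
    intro a b c hab hac hcb
    have hmem : s(a, b) ∈ G.edgeSet := hab
    have h := hC ⟨s(a,b), hmem⟩ a c b ((hlt a c).1 hac) ((hlt c b).1 hcb)
      (by simp) (by simp)
    simp only [decide_eq_true_eq, Sym2.mem_iff] at h
    rcases h with h | h
    · exact absurd h.symm (ne_of_lt hac)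
    · exact absurd h (ne_of_lt hcb)
  set n := Fintype.card V with hn
  have npos : 0 < n := Fintype.card_pos_iff.mpr hconn.nonempty
  let g : Fin n ≃o V := monoEquivOfFin V rfl
  let g' : ℕ → V := fun t => g ⟨t % n, Nat.mod_lt _ npos⟩
  have hg' : ∀ t (ht : t < n), g' t = g ⟨t, ht⟩ := by
    intro t ht; simp only [g', Nat.mod_eq_of_lt ht]
  have hg'inj : ∀ a b, a < n → b < n → g' a = g' b → a = b := by
    intro a b ha hb h
    have h2 : g ⟨a, ha⟩ = g ⟨b, hb⟩ := by rw [← hg' a ha, ← hg' b hb]; exact h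
    exact Fin.mk.inj_iff.mp (g.injective h2)
  have hg'lt : ∀ a b, a < n → b < n → a < b → g' a < g' b := by
    intro a b ha hb hab
    have : (⟨a, ha⟩ : Fin n) < ⟨b, hb⟩ := hab
    simpa [g', Nat.mod_eq_of_lt ha, Nat.mod_eq_of_lt hb] using g.strictMono this
  -- adjacency implies consecutive
  have key : ∀ a b, a < n → b < n → G.Adj (g' a) (g' b) → a < b → b = a + 1 := by
    intro a b ha hb hadj hab
    by_contra hne
    have h1 : a + 1 < b := lt_of_le_of_ne hab (Ne.symm (by omega) : a + 1 ≠ b) |>.le |> fun _ => by omega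
    have h1n : a + 1 < n := lt_trans h1 hb
    exact hbetween (g' a) (g' b) (g' (a+1)) hadj (hg'lt a (a+1) ha h1n (by omega))
      (hg'lt (a+1) b h1n hb h1)
  -- consecutive vertices are adjacent
  have consec : ∀ a, a + 1 < n → G.Adj (g' a) (g' (a + 1)) := by
    intro a ha
    have haa : a < n := by omega
    obtain ⟨w⟩ := hconn (g' a) (g' (a+1))
    have hS : (g' a) ∈ {v : V | v ≤ g' a} := Set.mem_setOf.mpr (le_refl _)
    have hS' : (g' (a+1)) ∉ {v : V | v ≤ g' a} :=
      not_le_of_gt (hg'lt a (a+1) haa ha (by omega))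
    obtain ⟨d, _, hd1, hd2⟩ := w.exists_boundary_dart _ hS hS'
    -- d.fst = g' k with k ≤ a?, d.snd = g' m with m > a
    set k := ((g.symm d.fst : Fin n) : ℕ) with hk
    set m := ((g.symm d.snd : Fin n) : ℕ) with hm
    have hkn : k < n := (g.symm d.fst).isLt
    have hmn : m < n := (g.symm d.snd).isLt
    have hfst : g' k = d.fst := by rw [hg' k hkn, Fin.eta]; exact g.apply_symm_apply _
    have hsnd : g' m = d.snd := by rw [hg' m hmn, Fin.eta]; exact g.apply_symm_apply _
    have hadj : G.Adj (g' k) (g' m) := by rw [hfst, hsnd]; exact d.adj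
    have hka : k ≤ a := by
      by_contra hka
      push_neg at hka
      have : g' a < g' k := hg'lt a k haa hkn hka
      rw [hfst] at this
      exact absurd hd1 (not_le_of_gt this)
    have hma : a < m := by
      by_contra hma
      push_neg at hma
      have : g' m ≤ g' a := by
        rcases lt_or_eq_of_le hma with h | h
        · exact le_of_lt (hg'lt m a hmn haa h)
        · rw [h]
      rw [hsnd] at this
      exact hd2 this
    have hkm : k < m := lt_of_le_of_lt hka hma
    have : m = k + 1 := key k m hkn hmn hadj hkm
    have hke : k = a := by omega
    have hme : m = a + 1 := by omega
    rw [hke, hme] at hadj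
    exact hadj
  -- the Hamiltonian walk
  have walkex : ∀ m, m < n → ∃ w : G.Walk (g' m) (g' 0),
      w.support = (List.range (m+1)).reverse.map g' := by
    intro m
    induction m with
    | zero => intro _; exact ⟨SimpleGraph.Walk.nil, by simp [List.range_succ]⟩
    | succ k ih =>
      intro h
      obtain ⟨w, hw⟩ := ih (by omega)
      refine ⟨SimpleGraph.Walk.cons (consec k h).symm w, ?_⟩
      rw [SimpleGraph.Walk.support_cons, hw]
      simp [List.range_succ]
  obtain ⟨w, hw⟩ := walkex (n-1) (Nat.sub_lt npos one_pos)
  have hsupp : w.support = (List.range n).reverse.map g' := by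
    have hn1 : n - 1 + 1 = n := Nat.succ_pred_eq_of_pos npos
    rw [hw, hn1]
  constructor
  · refine ⟨_, _, w, ?_⟩
    intro v
    have hmem : v ∈ w.support := by
      rw [hsupp]
      refine List.mem_map.mpr ⟨((g.symm v : Fin n) : ℕ), ?_, ?_⟩
      · simp [List.mem_reverse, List.mem_range, (g.symm v).isLt]
      · rw [hg' _ (g.symm v).isLt, Fin.eta]; exact g.apply_symm_apply v
    have hnodup : w.support.Nodup := by
      rw [hsupp]
      refine List.Nodup.map_on ?_ (by simp [List.nodup_range])
      intro a ha b hb hab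
      simp only [List.mem_reverse, List.mem_range] at ha hb
      exact hg'inj a b ha hb hab
    exact List.count_eq_one_of_mem hnodup hmem
  · -- edge count
    have hedges : G.edgeFinset = (Finset.range (n-1)).image (fun i => s(g' i, g' (i+1))) := by
      ext e
      simp only [Finset.mem_image, Finset.mem_range, SimpleGraph.mem_edgeFinset]
      constructor
      · intro he
        induction e with
        | h u v =>
        rw [SimpleGraph.mem_edgeSet] at he
        set a := ((g.symm u : Fin n) : ℕ) with ha
        set b := ((g.symm v : Fin n) : ℕ) with hb
        have han : a < n := (g.symm u).isLt
        have hbn : b < n := (g.symm v).isLt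
        have hu : g' a = u := by rw [hg' a han, Fin.eta]; exact g.apply_symm_apply u
        have hv : g' b = v := by rw [hg' b hbn, Fin.eta]; exact g.apply_symm_apply v
        have hadj : G.Adj (g' a) (g' b) := by rw [hu, hv]; exact he
        have hne : a ≠ b := fun h => he.ne (by rw [← hu, ← hv, h])
        rcases hne.lt_or_gt with h | h
        · have := key a b han hbn hadj h
          exact ⟨a, by omega, by rw [hu, ← this, hv]⟩
        · have := key b a hbn han hadj.symm h
          exact ⟨b, by omega, by rw [hv, ← this, hu, Sym2.eq_swap]⟩
      · rintro ⟨i, hi, rfl⟩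
        rw [SimpleGraph.mem_edgeSet]
        exact consec i (by omega)
    rw [hedges, Finset.card_image_of_injOn, Finset.card_range]
    intro a ha b hb hab
    simp only [Finset.coe_range, Set.mem_Iio] at ha hb
    rw [Sym2.eq_iff] at hab
    rcases hab with ⟨h1, _⟩ | ⟨h1, h2⟩
    · exact hg'inj a b (by omega) (by omega) h1
    · have := hg'inj a (b+1) (by omega) (by omega) h1
      have := hg'inj (a+1) b (by omega) (by omega) h2
      omega
end

section
/- A connected graph G on n vertices has a Hamiltonian path if and only if one can delete m − n + 1 rows from its edge-vertex incidence matrix so that the remaining matrix has the consecutive ones property for both rows and columns (the SC1P). -/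
/-- The simultaneous consecutive ones property: C1P for rows and for columns. -/
def HasSC1P {α β : Type*} (M : α → β → Bool) : Prop :=
  HasC1PRows M ∧ HasC1PRows (fun j i => M i j)


/-
Along a Hamiltonian path, number the vertices and the edges by their position on the path: edge `k`
joins vertices `k` and `k + 1`, so every row and every column of the incidence matrix of the
`n - 1` path edges has its ones at two consecutive positions; the other `m - n + 1` edges are the
deleted rows. Conversely, in a column order witnessing the C1P for rows, every remaining edge joins
two vertices that are neighbours in that order. There are only `n - 1` such neighbouring pairs and
at least `n - 1` remaining edges, so every neighbouring pair is an edge, and the column order is a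
Hamiltonian path. Connectedness gives `n ≤ m + 1`, so that `m + 1 - n` is not a truncated
subtraction.
-/

theorem hasC1PRows_of_le_add_one {α β : Type*} {M : α → β → Bool} (f : β → ℕ)
    (hf : Function.Injective f) (h : ∀ i j j', M i j → M i j' → f j' ≤ f j + 1) :
    HasC1PRows M :=
  ⟨f, hf, fun i j₁ _ j₃ h₁₂ h₂₃ h₁ h₃ => absurd (h i j₁ j₃ h₁ h₃) (by omega)⟩

theorem List.Nodup.eq_getElem_iff_idxOf_eq {α : Type*} [BEq α] [LawfulBEq α] {l : List α}
    (hl : l.Nodup) {i : ℕ} (hi : i < l.length) {x : α} : x = l[i] ↔ l.idxOf x = i := by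
  constructor
  · rintro rfl
    exact hl.idxOf_getElem i hi
  · rintro rfl
    exact (List.getElem_idxOf hi).symm

namespace SimpleGraph

variable {V : Type*} {G : SimpleGraph V}

namespace Walk

variable {a b : V}

theorem mem_edges_of_sortedLT_support [LinearOrder V] (p : G.Walk a b) (hp : p.support.SortedLT)
    {u v : V} (hu : u ∈ p.support) (hv : v ∈ p.support) (huv : u < v)
    (hconsec : ∀ w ∈ p.support, ¬(u < w ∧ w < v)) : s(u, v) ∈ p.edges := by
  obtain ⟨i, hi, rfl⟩ := List.getElem_of_mem hu
  obtain ⟨j, hj, rfl⟩ := List.getElem_of_mem hv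
  have hij : i < j := hp.getElem_lt_getElem_iff.1 huv
  obtain rfl : j = i + 1 := by
    by_contra hne
    exact hconsec _ (List.getElem_mem (n := i + 1) (by omega))
      ⟨hp.getElem_lt_getElem_iff.2 (by omega), hp.getElem_lt_getElem_iff.2 (by omega)⟩
  have hi' : i < p.edges.length := by simp at hj ⊢; omega
  convert List.getElem_mem hi' using 1
  rw [getElem_edges, getVert_eq_support_getElem _ (by simp at hi'; omega),
    getVert_eq_support_getElem _ (by simp at hi'; omega)]

variable [DecidableEq V]

theorem IsPath.mem_iff_idxOf_of_mem_edges {p : G.Walk a b} (hp : p.IsPath) {e : Sym2 V}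
    (he : e ∈ p.edges) (x : V) :
    x ∈ e ↔ p.support.idxOf x = p.edges.idxOf e ∨ p.support.idxOf x = p.edges.idxOf e + 1 := by
  have hk := List.idxOf_lt_length_of_mem he
  have hk' : p.edges.idxOf e < p.length := by simpa using hk
  conv_lhs => rw [← List.getElem_idxOf hk, getElem_edges, Sym2.mem_iff,
    getVert_eq_support_getElem _ hk'.le, getVert_eq_support_getElem _ hk',
    hp.support_nodup.eq_getElem_iff_idxOf_eq, hp.support_nodup.eq_getElem_iff_idxOf_eq]

theorem IsHamiltonian.hasSC1P_incidence {p : G.Walk a b} (hp : p.IsHamiltonian)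
    {P : Sym2 V → Prop} (hP : ∀ e, P e → e ∈ p.edges) :
    HasSC1P (fun (e : {e : Sym2 V // P e}) (v : V) => decide (v ∈ e.val)) := by
  have hmem := fun (e : {e : Sym2 V // P e}) => hp.isPath.mem_iff_idxOf_of_mem_edges (hP e e.2)
  constructor
  · refine hasC1PRows_of_le_add_one (p.support.idxOf ·)
      (fun x y hxy => (List.idxOf_inj (hp.mem_support x)).1 hxy) fun e x y hx hy => ?_
    simp only [decide_eq_true_eq, hmem] at hx hy
    omega
  · refine hasC1PRows_of_le_add_one (fun e => p.edges.idxOf e.val)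
      (fun e e' h => Subtype.ext ((List.idxOf_inj (hP e e.2)).1 h)) fun x e e' he he' => ?_
    simp only [decide_eq_true_eq, hmem] at he he'
    omega

end Walk

variable [Fintype V] [DecidableEq V]

theorem exists_isHamiltonian_of_edges_consecutive [LinearOrder V] [Nonempty V]
    {R : Set (Sym2 V)} (hRG : R ⊆ G.edgeSet) (hcard : Fintype.card V ≤ R.ncard + 1)
    (hR : ∀ u v w, s(u, v) ∈ R → u < w → w < v → False) :
    ∃ (a b : V) (p : G.Walk a b), p.IsHamiltonian := by
  set L := (Finset.univ : Finset V).sort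
  have hL : L.SortedLT := Finset.sortedLT_sort _
  have hmem (v : V) : v ∈ L := by simp [L]
  have hne : L ≠ [] := List.ne_nil_of_mem (hmem (Classical.arbitrary V))
  let q : (⊤ : SimpleGraph V).Walk _ _ := Walk.ofSupport L hne (hL.isChain.imp fun _ _ => ne_of_lt)
  have hq : q.support = L := Walk.support_ofSupport _ _
  have hqL : q.support.SortedLT := by rw [hq]; exact hL
  have hqmem (v : V) : v ∈ q.support := by rw [hq]; exact hmem v
  have hRq : R ⊆ {e | e ∈ q.edges} := by
    intro e he
    induction e using Sym2.ind with
    | _ u v =>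
      have hconsec (x y : V) := q.mem_edges_of_sortedLT_support hqL (hqmem x) (hqmem y)
      rcases (G.ne_of_adj (hRG he)).lt_or_gt with huv | hvu
      · exact hconsec u v huv fun w _ ⟨huw, hwv⟩ => hR u v w he huw hwv
      · rw [Sym2.eq_swap] at he ⊢
        exact hconsec v u hvu fun w _ ⟨hvw, hwu⟩ => hR v u w he hvw hwu
  have hlen : {e | e ∈ q.edges}.ncard = Fintype.card V - 1 := by
    have hpath : q.IsPath := Walk.IsPath.mk' hqL.nodup
    have hsupp := q.length_support
    rw [hq, Finset.length_sort, Finset.card_univ] at hsupp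
    rw [← List.coe_toFinset, Set.ncard_coe_finset, List.toFinset_card_of_nodup hpath.edges_nodup,
      Walk.length_edges]
    omega
  -- `R` lies among the `card V - 1` consecutive pairs and has at least that many elements.
  have hReq : R = {e | e ∈ q.edges} :=
    Set.eq_of_subset_of_ncard_le hRq (by omega) (List.finite_toSet _)
  refine ⟨_, _, q.transfer G fun e he => hRG (hReq ▸ he), fun v => ?_⟩
  rw [Walk.support_transfer, hq]
  exact List.count_eq_one_of_mem hL.nodup (hmem v)

theorem exists_isHamiltonian_of_hasC1PRows_incidence [Nonempty V] {P : Sym2 V → Prop}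
    (hPG : ∀ e, P e → e ∈ G.edgeSet) (hcard : Fintype.card V ≤ {e | P e}.ncard + 1)
    (hC1P : HasC1PRows (fun (e : {e : Sym2 V // P e}) (v : V) => decide (v ∈ e.val))) :
    ∃ (a b : V) (p : G.Walk a b), p.IsHamiltonian := by
  obtain ⟨f, hf, hrows⟩ := hC1P
  let : LinearOrder V := LinearOrder.lift' f hf
  refine exists_isHamiltonian_of_edges_consecutive hPG hcard fun u v w huv huw hwv => ?_
  have hw := hrows ⟨_, huv⟩ u w v huw hwv (by simp) (by simp)
  simp only [decide_eq_true_eq, Sym2.mem_iff] at hw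
  rcases hw with rfl | rfl
  · exact lt_irrefl _ huw
  · exact lt_irrefl _ hwv

end SimpleGraph

open SimpleGraph in
/-- A connected graph on `n` vertices and `m` edges has a Hamiltonian path iff one
can delete `m - n + 1` rows of its edge-vertex incidence matrix so that the
remaining matrix has the SC1P. -/
theorem hamiltonianPath_iff_sc1s_row_deletion {V : Type*} [Fintype V] [DecidableEq V]
    (G : SimpleGraph V) [DecidableRel G.Adj] (hconn : G.Connected) :
    (∃ (a b : V) (p : G.Walk a b), p.IsHamiltonian) ↔
    ∃ S : Finset (Sym2 V), S ⊆ G.edgeFinset ∧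
      S.card = G.edgeFinset.card + 1 - Fintype.card V ∧
      HasSC1P (fun (e : {e : Sym2 V // e ∈ G.edgeFinset ∧ e ∉ S}) (v : V) =>
        decide (v ∈ e.val)) := by
  have hV : 0 < Fintype.card V := Fintype.card_pos_iff.2 hconn.nonempty
  constructor
  · rintro ⟨a, b, p, hp⟩
    have hpG : p.edges.toFinset ⊆ G.edgeFinset := fun e he =>
      mem_edgeFinset.2 (p.edges_subset_edgeSet (List.mem_toFinset.1 he))
    have hpcard : p.edges.toFinset.card = Fintype.card V - 1 := by
      rw [List.toFinset_card_of_nodup hp.isPath.edges_nodup, Walk.length_edges, hp.length_eq]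
    refine ⟨G.edgeFinset \ p.edges.toFinset, Finset.sdiff_subset, ?_,
      hp.hasSC1P_incidence fun e ⟨he, hnot⟩ => ?_⟩
    · have := Finset.card_le_card hpG
      rw [Finset.card_sdiff_of_subset hpG, hpcard]
      omega
    · by_contra hnp
      exact hnot (Finset.mem_sdiff.2 ⟨he, by simpa using hnp⟩)
  · rintro ⟨S, hSG, hScard, hrows, -⟩
    have : Nonempty V := hconn.nonempty
    refine exists_isHamiltonian_of_hasC1PRows_incidence (fun e he => mem_edgeFinset.1 he.1) ?_ hrows
    have hm := hconn.card_vert_le_card_edgeSet_add_one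
    rw [Nat.card_eq_fintype_card, Nat.card_eq_fintype_card, ← edgeFinset_card] at hm
    have hR : {e | e ∈ G.edgeFinset ∧ e ∉ S} = ↑(G.edgeFinset \ S) := by ext; simp
    rw [hR, Set.ncard_coe_finset, Finset.card_sdiff_of_subset hSG]
    omega
end

section
/- The problem of deciding, given a binary matrix M and integer k, whether at most k rows can be deleted from M so that the remaining matrix has the simultaneous consecutive ones property, is NP-hard. -/
/-
If `p` is a Hamiltonian path, delete the edges off `p`: exactly `m - n + 1` of them. Ordering the
columns by position along `p` and the rows by edge position along `p` exhibits the SC1P, since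
every edge joins two consecutive vertices and every vertex lies on at most two consecutive edges.

Conversely only the row C1P is needed. In a column order witnessing it, every remaining edge joins
two vertices that are consecutive in that order. There are `n - 1` consecutive pairs and, because a
connected graph has `m ≥ n - 1`, exactly `n - 1` remaining edges; so every consecutive pair is an
edge and the column order is a Hamiltonian path.
-/

open Function SimpleGraph

section C1P

variable {α α' β : Type*}

theorem HasC1PRows.comp_left {M : α → β → Bool} (h : HasC1PRows M) (g : α' → α) :
    HasC1PRows fun i => M (g i) :=
  let ⟨f, hf, hM⟩ := h
  ⟨f, hf, fun i => hM (g i)⟩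

theorem HasC1PRows.comp_right {M : β → α → Bool} (h : HasC1PRows M) {g : α' → α}
    (hg : Injective g) : HasC1PRows fun j i => M j (g i) :=
  let ⟨f, hf, hM⟩ := h
  ⟨f ∘ g, hf.comp hg, fun j i₁ i₂ i₃ => hM j (g i₁) (g i₂) (g i₃)⟩

theorem HasSC1P.comp_left {M : α → β → Bool} (h : HasSC1P M) {g : α' → α} (hg : Injective g) :
    HasSC1P fun i => M (g i) :=
  ⟨h.1.comp_left g, h.2.comp_right hg⟩

end C1P

theorem exists_equiv_fin_strictMono {V β : Type*} [Fintype V] [LinearOrder β] {f : V → β}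
    (hf : Injective f) {k : ℕ} (hk : Fintype.card V = k) : ∃ σ : Fin k ≃ V, StrictMono (f ∘ σ) :=
  letI := LinearOrder.lift' f hf
  ⟨(Fintype.orderIsoFinOfCardEq V hk).toEquiv, (Fintype.orderIsoFinOfCardEq V hk).strictMono⟩

def incidenceMatrix {V : Type*} [DecidableEq V] (T : Set (Sym2 V)) (e : T) (v : V) : Bool :=
  decide (v ∈ (e : Sym2 V))

theorem HasSC1P.incidenceMatrix_mono {V : Type*} [DecidableEq V] {T T' : Set (Sym2 V)}
    (hT : T' ⊆ T) (h : HasSC1P (incidenceMatrix T)) : HasSC1P (incidenceMatrix T') :=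
  h.comp_left (Set.inclusion_injective hT)

namespace SimpleGraph

variable {V : Type*} [DecidableEq V] {G : SimpleGraph V}

theorem Walk.IsPath.idxOf_support_of_mem_edges {a b : V} {p : G.Walk a b} (hp : p.IsPath)
    {e : Sym2 V} {v : V} (he : e ∈ p.edges) (hv : v ∈ e) :
    p.support.idxOf v = p.edges.idxOf e ∨ p.support.idxOf v = p.edges.idxOf e + 1 := by
  have hi : p.edges.idxOf e < p.length := p.length_edges ▸ List.idxOf_lt_length_of_mem he
  have hpos : ∀ j ≤ p.length, p.support.idxOf (p.getVert j) = j := fun j hj => by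
    rw [p.getVert_eq_support_getElem hj]
    exact hp.support_nodup.idxOf_getElem _ _
  rw [← List.getElem_idxOf (List.idxOf_lt_length_of_mem he), Walk.getElem_edges] at hv
  rcases Sym2.mem_iff.mp hv with rfl | rfl
  · exact .inl (hpos _ hi.le)
  · exact .inr (hpos _ hi)

theorem Walk.IsHamiltonian.hasSC1P_incidenceMatrix_edges {a b : V} {p : G.Walk a b}
    (hp : p.IsHamiltonian) : HasSC1P (incidenceMatrix {e | e ∈ p.edges}) := by
  have hpath := hp.isPath
  refine ⟨⟨fun v => p.support.idxOf v, fun v w h => (List.idxOf_inj (hp.mem_support v)).mp h,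
    fun ⟨e, he⟩ v₁ v₂ v₃ h₁₂ h₂₃ hv₁ hv₃ => ?_⟩,
    ⟨fun e => p.edges.idxOf e.1, fun e e' h => Subtype.ext ((List.idxOf_inj e.2).mp h),
    fun v ⟨e₁, he₁⟩ e₂ ⟨e₃, he₃⟩ h₁₂ h₂₃ hv₁ hv₃ => ?_⟩⟩
  all_goals
    simp only [incidenceMatrix, decide_eq_true_eq] at *
    exfalso
  · rcases hpath.idxOf_support_of_mem_edges he hv₁ with h₁ | h₁ <;>
      rcases hpath.idxOf_support_of_mem_edges he hv₃ with h₃ | h₃ <;> omega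
  · rcases hpath.idxOf_support_of_mem_edges he₁ hv₁ with h₁ | h₁ <;>
      rcases hpath.idxOf_support_of_mem_edges he₃ hv₃ with h₃ | h₃ <;> omega

theorem exists_isHamiltonian_of_adj_castSucc_succ {k : ℕ} (σ : Fin (k + 1) ≃ V)
    (hσ : ∀ t : Fin k, G.Adj (σ t.castSucc) (σ t.succ)) :
    ∃ (a b : V) (p : G.Walk a b), p.IsHamiltonian := by
  have hchain : (List.ofFn σ).IsChain G.Adj := List.isChain_ofFn.2 fun i hi => hσ ⟨i, by omega⟩
  have hsupport := Walk.support_ofSupport (by simp) hchain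
  refine ⟨_, _, _, (Walk.IsPath.mk' (hsupport ▸ List.nodup_ofFn.2 σ.injective)).isHamiltonian_iff.2
    fun v => ?_⟩
  rw [hsupport, List.mem_ofFn]
  exact σ.surjective v

theorem exists_isHamiltonian_of_hasC1PRows_incidenceMatrix [Fintype V] [Nonempty V]
    {T : Set (Sym2 V)} (hTG : T ⊆ G.edgeSet) (hcard : Fintype.card V ≤ T.ncard + 1)
    (hT : HasC1PRows (incidenceMatrix T)) : ∃ (a b : V) (p : G.Walk a b), p.IsHamiltonian := by
  obtain ⟨f, hf, hC1P⟩ := hT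
  obtain ⟨k, hk⟩ := Nat.exists_eq_succ_of_ne_zero (Fintype.card_ne_zero (α := V))
  obtain ⟨σ, hσ⟩ := exists_equiv_fin_strictMono hf hk
  have hconsec : ∀ i j : Fin (k + 1), i < j → s(σ i, σ j) ∈ T → (j : ℕ) = i + 1 := by
    intro i j hij he
    by_contra hne
    let m : Fin (k + 1) := ⟨i + 1, by omega⟩
    have hm := hC1P ⟨_, he⟩ (σ i) (σ m) (σ j) (hσ (Fin.lt_def.2 (by simp [m])))
      (hσ (Fin.lt_def.2 (by simp [m]; omega))) (by simp [incidenceMatrix])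
      (by simp [incidenceMatrix])
    simp only [incidenceMatrix, decide_eq_true_eq, Sym2.mem_iff, σ.apply_eq_iff_eq,
      Fin.ext_iff, m] at hm
    omega
  let φ : Fin k → Sym2 V := fun t => s(σ t.castSucc, σ t.succ)
  have hmem : ∀ i j : Fin (k + 1), i < j → s(σ i, σ j) ∈ T → s(σ i, σ j) ∈ Set.range φ :=
    fun i j hij he => ⟨⟨i, by omega⟩, by simp [φ, Fin.ext_iff, hconsec i j hij he]⟩
  have hsub : T ⊆ Set.range φ := by
    intro e he
    induction e using Sym2.ind with | _ x y => ?_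
    obtain ⟨i, rfl⟩ := σ.surjective x
    obtain ⟨j, rfl⟩ := σ.surjective y
    have hij : i ≠ j := fun h => (hTG he).ne (congrArg σ h)
    rcases hij.lt_or_gt with h | h
    · exact hmem i j h he
    · rw [Sym2.eq_swap] at he ⊢
      exact hmem j i h he
  have hrange : (Set.range φ).ncard ≤ k := by
    rw [← Set.image_univ]
    exact (Set.ncard_image_le Set.finite_univ).trans (by simp)
  have heq : T = Set.range φ := Set.eq_of_subset_of_ncard_le hsub (by omega) (Set.finite_range φ)
  exact exists_isHamiltonian_of_adj_castSucc_succ σ fun t => hTG (heq ▸ ⟨t, rfl⟩ : φ t ∈ T)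

end SimpleGraph

/-- Correctness of the NP-hardness reduction from Hamiltonian Path: for every
connected graph `G` with `n` vertices and `m` edges, `G` has a Hamiltonian path
iff `m - n + 1` rows can be deleted from the edge-vertex incidence matrix of `G`
to obtain a matrix with the SC1P.  (This establishes NP-hardness of the
SC1S row-deletion problem.) -/
theorem sc1s_row_deletion_NP_hard_reduction :
    ∀ (V : Type) [Fintype V] [DecidableEq V] (G : SimpleGraph V) [DecidableRel G.Adj],
      G.Connected →
      ((∃ (a b : V) (p : G.Walk a b), p.IsHamiltonian) ↔
        ∃ S : Finset (Sym2 V), S ⊆ G.edgeFinset ∧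
          S.card = G.edgeFinset.card + 1 - Fintype.card V ∧
          HasSC1P (fun (e : {e : Sym2 V // e ∈ G.edgeFinset ∧ e ∉ S}) (v : V) =>
            decide (v ∈ e.val))) := by
  intro V _ _ G _ hG
  have := hG.nonempty
  have hV : 0 < Fintype.card V := Fintype.card_pos
  have hE : Fintype.card V ≤ G.edgeFinset.card + 1 := by
    rw [G.edgeFinset_card]
    simpa only [Nat.card_eq_fintype_card] using hG.card_vert_le_card_edgeSet_add_one
  constructor
  · rintro ⟨a, b, p, hp⟩
    have hpG : p.edges.toFinset ⊆ G.edgeFinset := fun e he =>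
      G.mem_edgeFinset.2 (p.edges_subset_edgeSet (List.mem_toFinset.1 he))
    have hpcard : p.edges.toFinset.card = Fintype.card V - 1 := by
      rw [List.toFinset_card_of_nodup hp.isPath.edges_nodup, p.length_edges, hp.length_eq]
    refine ⟨G.edgeFinset \ p.edges.toFinset, Finset.sdiff_subset, ?_,
      hp.hasSC1P_incidenceMatrix_edges.incidenceMatrix_mono fun e ⟨he, hS⟩ => ?_⟩
    · rw [Finset.card_sdiff_of_subset hpG, hpcard]
      omega
    · simpa [he] using hS
  · rintro ⟨S, hSG, hScard, hrows, -⟩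
    refine exists_isHamiltonian_of_hasC1PRows_incidenceMatrix (T := {e | e ∈ G.edgeFinset ∧ e ∉ S})
      (fun e he => G.mem_edgeFinset.1 he.1) ?_ hrows
    have hT : {e | e ∈ G.edgeFinset ∧ e ∉ S} = ↑(G.edgeFinset \ S) := by ext; simp
    rw [hT, Set.ncard_coe_finset, Finset.card_sdiff_of_subset hSG]
    have := Finset.card_le_card hSG
    omega
end

section
/- Let M be a binary matrix with at most two ones per column, no identical rows, no identical columns, that does not contain (up to row/column permutations) the matrix M_{3_1}^T as a submatrix. Then any two distinct submatrices of M of type M_{I_k} (k ≥ 1) are disjoint: they share no common row and no common column. -/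
/-- The matrix `M_{I_k}`: the `(k+2) × (k+2)` circulant matrix whose row `i` has
ones exactly in columns `i` and `i+1` (mod `k+2`). -/
def MIk (k : ℕ) : Fin (k + 2) → Fin (k + 2) → Bool :=
  fun i j => decide (j = i ∨ j = i + 1)

/-- The `3 × 4` matrix `M_{3_1}` with rows `(1,1,0,0)`, `(0,1,1,0)`, `(0,1,0,1)`. -/
def M31 : Fin 3 → Fin 4 → Bool :=
  !![true, true, false, false; false, true, true, false; false, true, false, true]

/-- The transpose of `M_{3_1}`. -/
def M31T : Fin 4 → Fin 3 → Bool := fun i j => M31 j i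

/-!
With at most two ones per column, a column is an edge between the (at most two) rows where it is
one, and an occurrence of `M_{I_k}` is a cycle in this graph on rows. Three distinct neighbours of a
row would span an `M_{3_1}^T`, so a row of an occurrence has no neighbours besides its two cycle
neighbours: the row set of an occurrence is closed under adjacency, and two occurrences sharing a
row have the same rows. As distinct columns have distinct pairs of ones, they then have the same
columns as well; and a shared column forces a shared row.
-/

open Finset Fin.CommRing

lemma Fin.cyclic_induction {n : ℕ} [NeZero n] {p : Fin n → Prop} (i₀ : Fin n) (h₀ : p i₀)
    (hstep : ∀ i, p i → p (i + 1)) (i : Fin n) : p i := by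
  have h : ∀ t : ℕ, p (i₀ + t) := by
    intro t
    induction t with
    | zero => simpa using h₀
    | succ t ih => simpa [Nat.cast_succ, ← add_assoc] using hstep _ ih
  simpa using h (i - i₀).val

def rowGraph {α β : Type*} (M : α → β → Bool) : SimpleGraph α where
  Adj u v := u ≠ v ∧ ∃ j, M u j = true ∧ M v j = true
  symm := ⟨fun _ _ ⟨huv, j, hu, hv⟩ => ⟨huv.symm, j, hv, hu⟩⟩
  loopless := ⟨fun _ h => h.1 rfl⟩

lemma rowGraph_adj {α β : Type*} {M : α → β → Bool} {u v : α} :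
    (rowGraph M).Adj u v ↔ u ≠ v ∧ ∃ j, M u j = true ∧ M v j = true :=
  Iff.rfl

section Columns

variable {α β : Type*} [Fintype α] {M : α → β → Bool}

lemma eq_or_eq_of_col {j : β} (hj : (univ.filter fun i => M i j = true).card ≤ 2)
    {a b v : α} (hab : a ≠ b) (ha : M a j = true) (hb : M b j = true) (hv : M v j = true) :
    v = a ∨ v = b := by
  by_contra! h
  refine (two_lt_card.2 ⟨a, ?_, b, ?_, v, ?_, hab, h.1.symm, h.2.symm⟩).not_ge hj <;> simpa

lemma col_eq_false {j : β} (hj : (univ.filter fun i => M i j = true).card ≤ 2)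
    {a b v : α} (hab : a ≠ b) (ha : M a j = true) (hb : M b j = true) (hva : v ≠ a)
    (hvb : v ≠ b) : M v j = false := by
  by_contra hv
  rcases eq_or_eq_of_col hj hab ha hb (by simpa using hv) with h | h
  exacts [hva h, hvb h]

lemma col_eq_of_two_ones (hcol : ∀ j, (univ.filter fun i => M i j = true).card ≤ 2)
    (hcols : ∀ j1 j2 : β, (∀ i, M i j1 = M i j2) → j1 = j2) {a b : α} {j j' : β}
    (hab : a ≠ b) (ha : M a j = true) (hb : M b j = true) (ha' : M a j' = true)
    (hb' : M b j' = true) : j = j' := by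
  refine hcols j j' fun i => Bool.eq_iff_iff.2 ⟨fun hi => ?_, fun hi => ?_⟩
  · rcases eq_or_eq_of_col (hcol j) hab ha hb hi with rfl | rfl <;> assumption
  · rcases eq_or_eq_of_col (hcol j') hab ha' hb' hi with rfl | rfl <;> assumption

lemma rowGraph_adj_eq_or_eq (hcol : ∀ j, (univ.filter fun i => M i j = true).card ≤ 2)
    (h31 : ¬ ∃ (r : Fin 4 ↪ α) (c : Fin 3 ↪ β), ∀ i j, M (r i) (c j) = M31T i j)
    {v w₀ w₁ w : α} (h₀ : (rowGraph M).Adj v w₀) (h₁ : (rowGraph M).Adj v w₁)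
    (h01 : w₀ ≠ w₁) (h : (rowGraph M).Adj v w) : w = w₀ ∨ w = w₁ := by
  by_contra! hw
  obtain ⟨hv₀, j₀, hvj₀, hwj₀⟩ := rowGraph_adj.1 h₀
  obtain ⟨hv₁, j₁, hvj₁, hwj₁⟩ := rowGraph_adj.1 h₁
  obtain ⟨hv, j, hvj, hwj⟩ := rowGraph_adj.1 h
  have f₁₀ := col_eq_false (hcol j₀) hv₀ hvj₀ hwj₀ hv₁.symm h01.symm
  have f₀₁ := col_eq_false (hcol j₁) hv₁ hvj₁ hwj₁ hv₀.symm h01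
  have f₀ := col_eq_false (hcol j) hv hvj hwj hv₀.symm (Ne.symm hw.1)
  have f₁ := col_eq_false (hcol j) hv hvj hwj hv₁.symm (Ne.symm hw.2)
  have f₂₀ := col_eq_false (hcol j₀) hv₀ hvj₀ hwj₀ hv.symm hw.1
  have f₂₁ := col_eq_false (hcol j₁) hv₁ hvj₁ hwj₁ hv.symm hw.2
  have hj₀₁ : j₀ ≠ j₁ := by rintro rfl; simp_all
  have hj₀ : j₀ ≠ j := by rintro rfl; simp_all
  have hj₁ : j₁ ≠ j := by rintro rfl; simp_all
  refine h31 ⟨⟨![w₀, v, w₁, w], ?_⟩, ⟨![j₀, j₁, j], ?_⟩, ?_⟩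
  · simp [Function.Injective, Fin.forall_fin_succ]
    grind
  · simp [Function.Injective, Fin.forall_fin_succ]
    grind
  · intro i j
    fin_cases i <;> fin_cases j <;> simp [M31T, M31, *]

end Columns

section Cycles

variable {α β : Type*} {M : α → β → Bool} {k : ℕ}
  {r : Fin (k + 2) ↪ α} {c : Fin (k + 2) → β}

lemma occ_self (hocc : ∀ i j, M (r i) (c j) = MIk k i j) (i : Fin (k + 2)) :
    M (r i) (c i) = true := by
  simp [hocc, MIk]

lemma occ_succ (hocc : ∀ i j, M (r i) (c j) = MIk k i j) (i : Fin (k + 2)) :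
    M (r i) (c (i + 1)) = true := by
  simp [hocc, MIk]

lemma occ_pred (hocc : ∀ i j, M (r i) (c j) = MIk k i j) (j : Fin (k + 2)) :
    M (r (j - 1)) (c j) = true := by
  simpa using occ_succ hocc (j - 1)

lemma rowGraph_adj_succ (hocc : ∀ i j, M (r i) (c j) = MIk k i j) (i : Fin (k + 2)) :
    (rowGraph M).Adj (r i) (r (i + 1)) :=
  ⟨r.injective.ne (by simp), c (i + 1), occ_succ hocc i, occ_self hocc (i + 1)⟩

lemma col_eq_true_iff [Fintype α] (hcol : ∀ j, (univ.filter fun i => M i j = true).card ≤ 2)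
    (hocc : ∀ i j, M (r i) (c j) = MIk k i j) (j : Fin (k + 2)) (v : α) :
    M v (c j) = true ↔ v = r (j - 1) ∨ v = r j := by
  refine ⟨eq_or_eq_of_col (hcol _) (r.injective.ne (by simp)) (occ_pred hocc j) (occ_self hocc j),
    ?_⟩
  rintro (rfl | rfl)
  exacts [occ_pred hocc j, occ_self hocc j]

lemma rowGraph_adj_iff [Fintype α] (hcol : ∀ j, (univ.filter fun i => M i j = true).card ≤ 2)
    (h31 : ¬ ∃ (r : Fin 4 ↪ α) (c : Fin 3 ↪ β), ∀ i j, M (r i) (c j) = M31T i j)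
    (hk : 1 ≤ k) (hocc : ∀ i j, M (r i) (c j) = MIk k i j) (i : Fin (k + 2)) (v : α) :
    (rowGraph M).Adj (r i) v ↔ v = r (i - 1) ∨ v = r (i + 1) := by
  have hpred : (rowGraph M).Adj (r i) (r (i - 1)) := by
    simpa using (rowGraph_adj_succ hocc (i - 1)).symm
  have htwo : (2 : Fin (k + 2)) ≠ 0 := by
    simp [Fin.ext_iff, Nat.mod_eq_of_lt (show 2 < k + 2 by omega)]
  have hne : r (i - 1) ≠ r (i + 1) := r.injective.ne fun h => htwo (by linear_combination -h)
  refine ⟨rowGraph_adj_eq_or_eq hcol h31 hpred (rowGraph_adj_succ hocc i) hne, ?_⟩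
  rintro (rfl | rfl)
  exacts [hpred, rowGraph_adj_succ hocc i]

end Cycles

section Ranges

variable {α β : Type*} [Fintype α] {M : α → β → Bool} {k k' : ℕ}
  {r : Fin (k + 2) ↪ α} {c : Fin (k + 2) → β}
  {r' : Fin (k' + 2) ↪ α} {c' : Fin (k' + 2) → β}

lemma range_row_subset_of_mem_range
    (hcol : ∀ j, (univ.filter fun i => M i j = true).card ≤ 2)
    (h31 : ¬ ∃ (r : Fin 4 ↪ α) (c : Fin 3 ↪ β), ∀ i j, M (r i) (c j) = M31T i j)
    (hk : 1 ≤ k) (hocc : ∀ i j, M (r i) (c j) = MIk k i j)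
    (hocc' : ∀ i j, M (r' i) (c' j) = MIk k' i j) {i' : Fin (k' + 2)}
    (hi' : r' i' ∈ Set.range r) : Set.range r' ⊆ Set.range r := by
  rintro _ ⟨a, rfl⟩
  refine Fin.cyclic_induction (p := (r' · ∈ Set.range r)) i' hi' (fun b ⟨i, hi⟩ => ?_) a
  rcases (rowGraph_adj_iff hcol h31 hk hocc i _).1 (hi ▸ rowGraph_adj_succ hocc' b) with h | h
  exacts [⟨_, h.symm⟩, ⟨_, h.symm⟩]

lemma range_col_subset_of_range_row_subset
    (hcol : ∀ j, (univ.filter fun i => M i j = true).card ≤ 2)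
    (hcols : ∀ j1 j2 : β, (∀ i, M i j1 = M i j2) → j1 = j2)
    (h31 : ¬ ∃ (r : Fin 4 ↪ α) (c : Fin 3 ↪ β), ∀ i j, M (r i) (c j) = M31T i j)
    (hk : 1 ≤ k) (hocc : ∀ i j, M (r i) (c j) = MIk k i j)
    (hocc' : ∀ i j, M (r' i) (c' j) = MIk k' i j) (hR : Set.range r' ⊆ Set.range r) :
    Set.range c' ⊆ Set.range c := by
  rintro _ ⟨b, rfl⟩
  obtain ⟨a, ha⟩ := hR ⟨b - 1, rfl⟩
  have hadj : (rowGraph M).Adj (r a) (r' b) := ha ▸ by simpa using rowGraph_adj_succ hocc' (b - 1)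
  have hpred : M (r a) (c' b) = true := ha ▸ occ_pred hocc' b
  rcases (rowGraph_adj_iff hcol h31 hk hocc a _).1 hadj with h | h
  · exact ⟨a, col_eq_of_two_ones hcol hcols (r.injective.ne (by simp)) (occ_pred hocc a)
      (occ_self hocc a) (h ▸ occ_self hocc' b) hpred⟩
  · exact ⟨a + 1, col_eq_of_two_ones hcol hcols (r.injective.ne (by simp)) (occ_succ hocc a)
      (occ_self hocc (a + 1)) hpred (h ▸ occ_self hocc' b)⟩

end Ranges

theorem MIk_submatrices_disjoint_general (m n : ℕ) (M : Fin m → Fin n → Bool)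
    (hcol : ∀ j, (Finset.univ.filter fun i => M i j = true).card ≤ 2)
    (hcols : ∀ j1 j2 : Fin n, (∀ i, M i j1 = M i j2) → j1 = j2)
    (h31 : ¬ ∃ (r : Fin 4 ↪ Fin m) (c : Fin 3 ↪ Fin n), ∀ i j, M (r i) (c j) = M31T i j)
    {k k' : ℕ} (hk : 1 ≤ k) (hk' : 1 ≤ k')
    (r : Fin (k + 2) ↪ Fin m) (c : Fin (k + 2) ↪ Fin n)
    (r' : Fin (k' + 2) ↪ Fin m) (c' : Fin (k' + 2) ↪ Fin n)
    (hocc : ∀ i j, M (r i) (c j) = MIk k i j)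
    (hocc' : ∀ i j, M (r' i) (c' j) = MIk k' i j)
    (hdist : Set.range r ≠ Set.range r' ∨ Set.range c ≠ Set.range c') :
    Disjoint (Set.range r) (Set.range r') ∧ Disjoint (Set.range c) (Set.range c') := by
  have hrow : ∀ i i', r i ≠ r' i' := by
    intro i i' h
    have hR : Set.range r = Set.range r' :=
      (range_row_subset_of_mem_range hcol h31 hk' hocc' hocc ⟨i', h.symm⟩).antisymm
        (range_row_subset_of_mem_range hcol h31 hk hocc hocc' ⟨i, h⟩)
    have hC : Set.range c = Set.range c' :=
      (range_col_subset_of_range_row_subset hcol hcols h31 hk' hocc' hocc hR.le).antisymm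
        (range_col_subset_of_range_row_subset hcol hcols h31 hk hocc hocc' hR.ge)
    exact hdist.elim (· hR) (· hC)
  refine ⟨Set.disjoint_left.2 ?_, Set.disjoint_left.2 ?_⟩
  · rintro _ ⟨i, rfl⟩ ⟨i', h⟩
    exact hrow i i' h.symm
  · rintro _ ⟨j, rfl⟩ ⟨j', h⟩
    have hj : M (r j) (c' j') = true := h ▸ occ_self hocc j
    rcases (col_eq_true_iff hcol hocc' j' (r j)).1 hj with h' | h'
    exacts [hrow _ _ h', hrow _ _ h']

/-- Let `M` be a binary matrix with at most two ones per column, no identical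
rows or columns, and not containing `M_{3_1}^T` (up to permutations) as a
submatrix.  Then any two distinct submatrices of `M` of type `M_{I_k}` (`k ≥ 1`)
share no common row and no common column. -/
theorem MIk_submatrices_disjoint (m n : ℕ) (M : Fin m → Fin n → Bool)
    (hcol : ∀ j, (Finset.univ.filter fun i => M i j = true).card ≤ 2)
    (hrows : ∀ i1 i2 : Fin m, (∀ j, M i1 j = M i2 j) → i1 = i2)
    (hcols : ∀ j1 j2 : Fin n, (∀ i, M i j1 = M i j2) → j1 = j2)
    (h31 : ¬ ∃ (r : Fin 4 ↪ Fin m) (c : Fin 3 ↪ Fin n), ∀ i j, M (r i) (c j) = M31T i j)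
    {k k' : ℕ} (hk : 1 ≤ k) (hk' : 1 ≤ k')
    (r : Fin (k + 2) ↪ Fin m) (c : Fin (k + 2) ↪ Fin n)
    (r' : Fin (k' + 2) ↪ Fin m) (c' : Fin (k' + 2) ↪ Fin n)
    (hocc : ∀ i j, M (r i) (c j) = MIk k i j)
    (hocc' : ∀ i j, M (r' i) (c' j) = MIk k' i j)
    (hdist : Set.range r ≠ Set.range r' ∨ Set.range c ≠ Set.range c') :
    Disjoint (Set.range r) (Set.range r') ∧ Disjoint (Set.range c) (Set.range c') :=
  MIk_submatrices_disjoint_general m n M hcol hcols h31 hk hk' r c r' c' hocc hocc' hdist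
end

section
/- Let C be an even chordless cycle of length 2n (n ≥ 3), viewed as a bipartite graph. The minimum number of edges that must be added to C to make it chordal bipartite is n − 2. -/
/-!
The fan, `C_{2n}` together with the chords joining `0` to the odd vertices `3, 5, …, 2n - 3`,
is chordal bipartite: deleting the apex `0` leaves a path, so every cycle passes through `0`,
and `0` is adjacent to the fourth vertex of any cycle started at `0`, which is odd.

Conversely, in a chordal bipartite graph a cycle of length `2a` spans at least `3a - 2` edges.
For `a ≥ 3` a chord splits the cycle into two even cycles of lengths `2a₁, 2a₂ ≥ 4` with
`a₁ + a₂ = a + 1` that share only the chord, so induction gives at least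
`(3a₁ - 2) + (3a₂ - 2) - 1 = 3a - 2` edges. Applied to the Hamiltonian cycle `C_{2n}` of a
completion `H`, this gives `|E(H)| ≥ 3n - 2 ≥ |E(C_{2n})| + (n - 2)`.
-/

/-- The cycle on the `2n` vertices `ZMod (2n)`, with `u ~ u + 1`. -/
def cycleGraph (n : ℕ) : SimpleGraph (ZMod (2 * n)) :=
  SimpleGraph.fromRel (fun u v => v = u + 1)

/-- Edges respect the natural bipartition of the even cycle (even/odd vertices). -/
def RespectsBipartition {n : ℕ} (H : SimpleGraph (ZMod (2 * n))) : Prop :=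
  ∀ u v, H.Adj u v → ¬ (Even (ZMod.val u) ↔ Even (ZMod.val v))

/-- A graph is chordal bipartite if every cycle of length at least `6` has a
chord: an edge of the graph joining two vertices of the cycle that is not an edge
of the cycle. -/
def ChordalBipartite {V : Type*} (H : SimpleGraph V) : Prop :=
  ∀ (v : V) (w : H.Walk v v), w.IsCycle → 6 ≤ w.length →
    ∃ a b, a ∈ w.support ∧ b ∈ w.support ∧ H.Adj a b ∧ s(a, b) ∉ w.edges

namespace SimpleGraph

variable {V : Type*} {G : SimpleGraph V}

lemma Walk.IsTrail.length_le_ncard_edgeSet_inter_sym2 [Finite V] {u v : V} {w : G.Walk u v}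
    (hw : w.IsTrail) : w.length ≤ (G.edgeSet ∩ {z | z ∈ w.support}.sym2).ncard := by
  classical
  calc w.length = (w.edges.toFinset : Set (Sym2 V)).ncard := by
        rw [Set.ncard_coe_finset, List.toFinset_card_of_nodup hw.edges_nodup, w.length_edges]
    _ ≤ _ := Set.ncard_le_ncard ?_ (Set.toFinite _)
  intro e he
  rw [Finset.mem_coe, List.mem_toFinset] at he
  refine ⟨w.edges_subset_edgeSet he, ?_⟩
  induction e with
  | h a b => exact ⟨w.fst_mem_support_of_mem_edges he, w.snd_mem_support_of_mem_edges he⟩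

lemma ncard_edgeSet_inter_sym2_add_le [Finite V] {s t r : Set V} {x y : V} (hs : s ⊆ r)
    (ht : t ⊆ r) (hst : s ∩ t ⊆ {x, y}) :
    (G.edgeSet ∩ s.sym2).ncard + (G.edgeSet ∩ t.sym2).ncard ≤
      (G.edgeSet ∩ r.sym2).ncard + 1 := by
  rw [← Set.ncard_union_add_ncard_inter _ _ (Set.toFinite _) (Set.toFinite _)]
  gcongr ?_ + ?_
  · refine Set.ncard_le_ncard (Set.union_subset ?_ ?_) (Set.toFinite _) <;>
      refine Set.inter_subset_inter_right _ fun e he => Set.mem_sym2_iff_subset.mpr ?_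
    · exact (Set.mem_sym2_iff_subset.mp he).trans hs
    · exact (Set.mem_sym2_iff_subset.mp he).trans ht
  · calc _ ≤ ({s(x, y)} : Set (Sym2 V)).ncard := Set.ncard_le_ncard ?_ (Set.toFinite _)
      _ = 1 := Set.ncard_singleton _
    rintro e ⟨⟨he, hes⟩, -, het⟩
    induction e with
    | h a b =>
      have hab : a ≠ b := G.ne_of_adj he
      have ha := hst ⟨hes.1, het.1⟩
      have hb := hst ⟨hes.2, het.2⟩
      simp only [Set.mem_insert_iff, Set.mem_singleton_iff] at ha hb ⊢
      rcases ha with rfl | rfl <;> rcases hb with rfl | rfl <;> simp_all [Sym2.eq_swap]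

lemma Walk.IsCycle.exists_isPath_isPath {u x y : V} {w : G.Walk u u} (hw : w.IsCycle)
    (hx : x ∈ w.support) (hy : y ∈ w.support) (hxy : x ≠ y) :
    ∃ (p : G.Walk x y) (q : G.Walk y x), p.IsPath ∧ q.IsPath ∧
      p.length + q.length = w.length ∧ (∀ e ∈ p.edges ++ q.edges, e ∈ w.edges) ∧
      (∀ z ∈ p.support ++ q.support, z ∈ w.support) ∧
      ∀ z ∈ p.support, z ∈ q.support → z = x ∨ z = y := by
  classical
  set c := w.rotate x hx
  have hy' : y ∈ c.support := (w.mem_support_rotate_iff x hx).mpr hy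
  set p := c.takeUntil y hy'
  set q := c.dropUntil y hy'
  have hpq : p.append q = c := c.take_spec hy'
  obtain ⟨hp, hq, hdisj⟩ : p.support.tail.Nodup ∧ q.support.tail.Nodup ∧
      ∀ a ∈ p.support.tail, ∀ b ∈ q.support.tail, a ≠ b := by
    rw [← List.nodup_append, ← Walk.tail_support_append, hpq]
    exact (hw.rotate hx).support_nodup
  have hyp : y ∈ p.support.tail := p.end_mem_tail_support_of_ne hxy
  have hxq : x ∈ q.support.tail := q.end_mem_tail_support_of_ne hxy.symm
  refine ⟨p, q, ?_, ?_, ?_, fun e he => ?_, fun z hz => ?_, fun z hzp hzq => ?_⟩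
  · rw [Walk.isPath_def, ← p.cons_tail_support]
    exact List.nodup_cons.mpr ⟨fun h => hdisj x h x hxq rfl, hp⟩
  · rw [Walk.isPath_def, ← q.cons_tail_support]
    exact List.nodup_cons.mpr ⟨fun h => hdisj y hyp y h rfl, hq⟩
  · rw [← Walk.length_append, hpq, Walk.length_rotate]
  · rw [← Walk.edges_append, hpq] at he
    exact (w.rotate_edges x hx).mem_iff.mp he
  · rw [← w.mem_support_rotate_iff x hx]
    change z ∈ c.support
    rw [← hpq, Walk.mem_support_append_iff]
    exact List.mem_append.mp hz
  · rw [← p.cons_tail_support, List.mem_cons] at hzp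
    rw [← q.cons_tail_support, List.mem_cons] at hzq
    rcases hzp with rfl | hzp
    · exact Or.inl rfl
    rcases hzq with rfl | hzq
    · exact Or.inr rfl
    exact absurd rfl (hdisj z hzp z hzq)

lemma Walk.IsCycle.exists_split_of_chord {u x y : V} {w : G.Walk u u} (hw : w.IsCycle)
    (hx : x ∈ w.support) (hy : y ∈ w.support) (hxy : G.Adj x y) (hchord : s(x, y) ∉ w.edges) :
    ∃ (c₁ : G.Walk x x) (c₂ : G.Walk y y), c₁.IsCycle ∧ c₂.IsCycle ∧
      c₁.length + c₂.length = w.length + 2 ∧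
      {z | z ∈ c₁.support} ⊆ {z | z ∈ w.support} ∧ {z | z ∈ c₂.support} ⊆ {z | z ∈ w.support} ∧
      {z | z ∈ c₁.support} ∩ {z | z ∈ c₂.support} ⊆ {x, y} := by
  obtain ⟨p, q, hp, hq, hlen, hedges, hsupp, hdisj⟩ := hw.exists_isPath_isPath hx hy hxy.ne
  refine ⟨q.cons hxy, p.cons hxy.symm, ?_, ?_, ?_, ?_, ?_, ?_⟩
  · exact (Walk.cons_isCycle_iff q hxy).mpr
      ⟨hq, fun h => hchord (hedges _ (List.mem_append_right _ h))⟩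
  · exact (Walk.cons_isCycle_iff p hxy.symm).mpr
      ⟨hp, fun h => hchord (hedges _ (List.mem_append_left _ (Sym2.eq_swap ▸ h)))⟩
  · simp only [Walk.length_cons]
    omega
  all_goals simp only [Set.subset_def, Set.mem_inter_iff, Set.mem_ofPred_eq, Walk.support_cons,
    List.mem_cons]
  · rintro z (rfl | hz)
    exacts [hx, hsupp z (List.mem_append_right _ hz)]
  · rintro z (rfl | hz)
    exacts [hy, hsupp z (List.mem_append_left _ hz)]
  · rintro z ⟨rfl | hzq, rfl | hzp⟩
    · exact Or.inl rfl
    · exact Or.inl rfl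
    · exact Or.inr rfl
    · exact hdisj z hzp hzq

theorem Walk.IsCycle.three_mul_length_le [Finite V] (col : G.Coloring Bool)
    (hG : ChordalBipartite G) {u : V} {w : G.Walk u u} (hw : w.IsCycle) :
    3 * w.length ≤ 2 * (G.edgeSet ∩ {z | z ∈ w.support}.sym2).ncard + 4 := by
  induction hm : w.length using Nat.strong_induction_on generalizing u w with
  | _ m ih =>
  have four_le : ∀ {v : V} {c : G.Walk v v}, c.IsCycle → 4 ≤ c.length := fun {_ c} hc => by
    obtain ⟨k, hk⟩ := (col.even_length_iff_congr c).mpr Iff.rfl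
    have := hc.three_le_length
    omega
  by_cases h6 : m < 6
  · have hE := hw.isCircuit.isTrail.length_le_ncard_edgeSet_inter_sym2
    have h4 := four_le hw
    obtain ⟨k, hk⟩ := (col.even_length_iff_congr w).mpr Iff.rfl
    omega
  · obtain ⟨x, y, hx, hy, hxy, hchord⟩ := hG u w hw (by omega)
    obtain ⟨c₁, c₂, hc₁, hc₂, hlen, hs₁, hs₂, hs⟩ := hw.exists_split_of_chord hx hy hxy hchord
    have h₁ := four_le hc₁
    have h₂ := four_le hc₂
    have hE₁ := ih _ (by omega) hc₁ rfl
    have hE₂ := ih _ (by omega) hc₂ rfl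
    have hE := ncard_edgeSet_inter_sym2_add_le (G := G) hs₁ hs₂ hs
    omega

lemma Walk.IsCycle.eq_snd_or_eq_penultimate_of_mem_edges {u y : V} {c : G.Walk u u}
    (hc : c.IsCycle) (h : s(u, y) ∈ c.edges) : y = c.snd ∨ y = c.penultimate := by
  rw [← c.cons_tail_eq hc.not_nil, Walk.edges_cons, List.mem_cons] at h
  rcases h with h | h
  · left
    rcases Sym2.eq_iff.mp h with ⟨-, h⟩ | ⟨h, rfl⟩ <;> exact h
  · right
    rw [hc.isPath_tail.eq_penultimate_of_mem_edges h, Walk.penultimate, Walk.getVert_tail,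
      Walk.length_tail, Walk.penultimate]
    have := hc.three_le_length
    congr 1
    omega

lemma Walk.IsCycle.exists_two_lower_neighbors {α : Type*} [LinearOrder α] (f : V → α) {u : V}
    {c : G.Walk u u} (hc : c.IsCycle) :
    ∃ x y z, x ∈ c.support ∧ y ∈ c.support ∧ z ∈ c.support ∧ y ≠ z ∧ G.Adj x y ∧ G.Adj x z ∧
      f y ≤ f x ∧ f z ≤ f x := by
  classical
  obtain ⟨x, hx, hmax⟩ := c.support.toFinset.exists_max_image f ⟨u, by simp⟩
  rw [List.mem_toFinset] at hx
  set d := c.rotate x hx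
  have hd : d.IsCycle := hc.rotate hx
  have hmem : ∀ {z}, z ∈ d.support → z ∈ c.support := (c.mem_support_rotate_iff x hx).mp
  have hy : d.snd ∈ c.support := hmem (d.getVert_mem_support 1)
  have hz : d.penultimate ∈ c.support := hmem (d.getVert_mem_support _)
  exact ⟨x, d.snd, d.penultimate, hx, hy, hz, hd.snd_ne_penultimate, d.adj_snd hd.not_nil,
    (d.adj_penultimate hd.not_nil).symm, hmax _ (List.mem_toFinset.mpr hy),
    hmax _ (List.mem_toFinset.mpr hz)⟩

lemma exists_isHamiltonianCycle_of_adj_add_one {m : ℕ} (hm : 3 ≤ m) {G : SimpleGraph (ZMod m)}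
    (hG : ∀ u, G.Adj u (u + 1)) : ∃ w : G.Walk 0 0, w.IsHamiltonianCycle := by
  obtain ⟨k, rfl⟩ : ∃ k, m = k + 3 := ⟨m - 3, by omega⟩
  have hle : SimpleGraph.cycleGraph (k + 3) ≤ G := by
    intro u v huv
    rcases cycleGraph_adj.mp huv with h | h
    · exact eq_add_of_sub_eq' h ▸ (hG v).symm
    · exact eq_add_of_sub_eq' h ▸ hG u
  refine ⟨(cycleGraph.cycle k).mapLe hle, ?_⟩
  exact (Walk.isHamiltonianCycle_iff_isCycle_and_length_eq.mpr
    ⟨cycleGraph.isCycle_cycle, by simp⟩).map Function.bijective_id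

end SimpleGraph

namespace ZMod

lemma even_val_natCast (n a : ℕ) : Even (a : ZMod (2 * n)).val ↔ Even a := by
  rw [val_natCast, Nat.even_iff, Nat.even_iff, Nat.mod_mod_of_dvd _ (dvd_mul_right 2 n)]

lemma even_val_add_one {n : ℕ} [NeZero n] (u : ZMod (2 * n)) :
    Even (u + 1).val ↔ ¬ Even u.val := by
  rw [← natCast_zmod_val u, ← Nat.cast_succ, even_val_natCast, even_val_natCast,
    Nat.even_add_one]

lemma val_add_one_of_ne_zero {m : ℕ} [NeZero m] {x : ZMod m} (h : x + 1 ≠ 0) :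
    (x + 1).val = x.val + 1 := by
  rw [← natCast_zmod_val x, ← Nat.cast_succ] at h ⊢
  rw [val_cast_of_lt (lt_of_le_of_ne (val_lt x) fun hm => h (by rw [hm, natCast_self])),
    val_natCast_of_lt (val_lt x)]

end ZMod

section CycleGraph

variable {n : ℕ} [NeZero n]

lemma cycleGraph_adj_iff {u v : ZMod (2 * n)} :
    (cycleGraph n).Adj u v ↔ v = u + 1 ∨ u = v + 1 := by
  rw [cycleGraph, SimpleGraph.fromRel_adj, and_iff_right_iff_imp]
  rintro (rfl | rfl) h
  · have := ZMod.even_val_add_one u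
    rw [← h] at this
    exact iff_not_self this
  · have := ZMod.even_val_add_one v
    rw [h] at this
    exact iff_not_self this

lemma cycleGraph_adj_add_one (u : ZMod (2 * n)) : (cycleGraph n).Adj u (u + 1) :=
  cycleGraph_adj_iff.mpr (Or.inl rfl)

lemma cycleGraph_respectsBipartition : RespectsBipartition (cycleGraph n) := by
  rintro u v huv
  rcases cycleGraph_adj_iff.mp huv with rfl | rfl
  · rw [ZMod.even_val_add_one]; tauto
  · rw [ZMod.even_val_add_one]; tauto

lemma ncard_edgeSet_cycleGraph_le : (cycleGraph n).edgeSet.ncard ≤ 2 * n := by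
  have hsub : (cycleGraph n).edgeSet ⊆ (fun u => s(u, u + 1)) '' Set.univ := by
    intro e he
    induction e using Sym2.ind with
    | _ u v =>
      rcases cycleGraph_adj_iff.mp ((cycleGraph n).mem_edgeSet.mp he) with rfl | rfl
      exacts [⟨u, trivial, rfl⟩, ⟨v, trivial, Sym2.eq_swap⟩]
  calc (cycleGraph n).edgeSet.ncard ≤ ((fun u => s(u, u + 1)) '' Set.univ).ncard :=
        Set.ncard_le_ncard hsub (Set.toFinite _)
    _ ≤ (Set.univ : Set (ZMod (2 * n))).ncard := Set.ncard_image_le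
    _ = 2 * n := by rw [Set.ncard_univ, Nat.card_zmod]

end CycleGraph

def RespectsBipartition.coloring {n : ℕ} {H : SimpleGraph (ZMod (2 * n))}
    (hH : RespectsBipartition H) : H.Coloring Bool :=
  SimpleGraph.Coloring.mk (fun u => decide (Even u.val)) fun {u v} huv h =>
    hH u v huv (by simpa using h)

lemma RespectsBipartition.even_length_iff {n : ℕ} {H : SimpleGraph (ZMod (2 * n))}
    (hH : RespectsBipartition H) {u v : ZMod (2 * n)} (p : H.Walk u v) :
    Even p.length ↔ (Even u.val ↔ Even v.val) := by
  rw [hH.coloring.even_length_iff_congr p]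
  simp [RespectsBipartition.coloring, SimpleGraph.Coloring.mk]

def fanChords (n : ℕ) : Set (Sym2 (ZMod (2 * n))) :=
  Set.range fun k : Fin (n - 2) => s(0, ((2 * (k : ℕ) + 3 : ℕ) : ZMod (2 * n)))

def fanGraph (n : ℕ) : SimpleGraph (ZMod (2 * n)) :=
  cycleGraph n ⊔ SimpleGraph.fromEdgeSet (fanChords n)

section Fan

variable {n : ℕ}

lemma val_fanChord (k : Fin (n - 2)) :
    ((2 * (k : ℕ) + 3 : ℕ) : ZMod (2 * n)).val = 2 * k + 3 :=
  ZMod.val_cast_of_lt (by omega)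

lemma cycleGraph_adj_of_fanGraph_adj {x z : ZMod (2 * n)} (hx : x ≠ 0) (hz : z ≠ 0)
    (h : (fanGraph n).Adj x z) : (cycleGraph n).Adj x z := by
  rcases h with h | ⟨⟨k, hk⟩, -⟩
  · exact h
  · rcases Sym2.eq_iff.mp hk with ⟨h, -⟩ | ⟨h, -⟩
    exacts [absurd h.symm hx, absurd h.symm hz]

variable [NeZero n]

lemma fanGraph_respectsBipartition : RespectsBipartition (fanGraph n) := by
  rintro u v (h | ⟨⟨k, hk⟩, -⟩)
  · exact cycleGraph_respectsBipartition u v h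
  · rcases Sym2.eq_iff.mp hk with ⟨rfl, rfl⟩ | ⟨rfl, rfl⟩ <;>
      rw [ZMod.even_val_natCast, ZMod.val_zero] <;> simp [parity_simps]

lemma fanGraph_adj_zero_of_not_even {z : ZMod (2 * n)} (hz : ¬ Even z.val) :
    (fanGraph n).Adj 0 z := by
  have hlt := ZMod.val_lt z
  have hcast := ZMod.natCast_zmod_val z
  rw [Nat.even_iff] at hz
  obtain h | h | h : z.val = 1 ∨ z.val + 1 = 2 * n ∨ 3 ≤ z.val ∧ z.val + 3 ≤ 2 * n := by omega
  · left
    refine cycleGraph_adj_iff.mpr (Or.inl ?_)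
    rw [zero_add, ← hcast, h, Nat.cast_one]
  · left
    refine cycleGraph_adj_iff.mpr (Or.inr ?_)
    rw [← hcast, ← Nat.cast_add_one, h, ZMod.natCast_self]
  · right
    refine ⟨⟨⟨(z.val - 3) / 2, by omega⟩, ?_⟩, fun h0 => ?_⟩
    · show s(0, ((2 * ((z.val - 3) / 2) + 3 : ℕ) : ZMod (2 * n))) = s(0, z)
      rw [show 2 * ((z.val - 3) / 2) + 3 = z.val by omega, hcast]
    · rw [← h0, ZMod.val_zero] at h
      omega

lemma fanGraph_zero_mem_support {u : ZMod (2 * n)} {c : (fanGraph n).Walk u u}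
    (hc : c.IsCycle) : 0 ∈ c.support := by
  by_contra h0
  obtain ⟨x, y, z, hx, hy, hz, hyz, hxy, hxz, hyx, hzx⟩ := hc.exists_two_lower_neighbors ZMod.val
  have hne : ∀ {v}, v ∈ c.support → v ≠ 0 := fun hv h => h0 (h ▸ hv)
  have lower : ∀ {v}, v ∈ c.support → (fanGraph n).Adj x v → v.val ≤ x.val → x = v + 1 := by
    intro v hv hxv hle
    rcases cycleGraph_adj_iff.mp (cycleGraph_adj_of_fanGraph_adj (hne hx) (hne hv) hxv) with
      rfl | h
    · rw [ZMod.val_add_one_of_ne_zero (hne hv)] at hle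
      omega
    · exact h
  exact hyz (add_right_cancel ((lower hy hxy hyx).symm.trans (lower hz hxz hzx)))

lemma fanGraph_chordalBipartite : ChordalBipartite (fanGraph n) := by
  classical
  intro v w hw h6
  have h0 := fanGraph_zero_mem_support hw
  set c := w.rotate 0 h0
  have hc : c.IsCycle := hw.rotate h0
  have hlen : c.length = w.length := w.length_rotate 0 h0
  have hodd : ¬ Even (c.getVert 3).val := by
    have := fanGraph_respectsBipartition.even_length_iff (c.take 3)
    rw [SimpleGraph.Walk.take_length, min_eq_left (by omega)] at this
    simpa [parity_simps] using this
  refine ⟨0, c.getVert 3, h0, (w.mem_support_rotate_iff 0 h0).mp (c.getVert_mem_support 3),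
    fanGraph_adj_zero_of_not_even hodd, fun hmem => ?_⟩
  rcases hc.eq_snd_or_eq_penultimate_of_mem_edges ((w.rotate_edges 0 h0).mem_iff.mpr hmem)
    with h | h
  · have := hc.getVert_injOn (by simp; omega) (by simp; omega) h
    omega
  · have := hc.getVert_injOn (by simp; omega) (by simp; omega) h
    omega

lemma ncard_edgeSet_fanGraph :
    (fanGraph n).edgeSet.ncard = (cycleGraph n).edgeSet.ncard + (n - 2) := by
  have hdiag : Disjoint (fanChords n) Sym2.diagSet := by
    rw [Set.disjoint_left]
    rintro _ ⟨k, rfl⟩ h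
    have := congrArg ZMod.val (Sym2.mk_isDiag_iff.mp h)
    rw [ZMod.val_zero, val_fanChord] at this
    omega
  have hcyc : Disjoint (cycleGraph n).edgeSet (fanChords n) := by
    rw [Set.disjoint_right]
    rintro _ ⟨k, rfl⟩ h
    rcases cycleGraph_adj_iff.mp ((cycleGraph n).mem_edgeSet.mp h) with h | h
    · have := congrArg ZMod.val h
      rw [val_fanChord, zero_add, ZMod.val_one'' (by omega)] at this
      omega
    · rw [show ((2 * (k : ℕ) + 3 : ℕ) : ZMod (2 * n)) + 1 =
          ((2 * (k : ℕ) + 4 : ℕ) : ZMod (2 * n)) by push_cast; ring] at h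
      have := congrArg ZMod.val h
      rw [ZMod.val_zero, ZMod.val_cast_of_lt (by omega)] at this
      omega
  have hinj : Function.Injective fun k : Fin (n - 2) =>
      s((0 : ZMod (2 * n)), ((2 * (k : ℕ) + 3 : ℕ) : ZMod (2 * n))) := by
    intro k l h
    have := congrArg ZMod.val (Sym2.congr_right.mp h)
    rw [val_fanChord, val_fanChord] at this
    ext
    omega
  rw [fanGraph, SimpleGraph.edgeSet_sup, SimpleGraph.edgeSet_fromEdgeSet, hdiag.sdiff_eq_left,
    Set.ncard_union_eq hcyc, fanChords, Set.ncard_range_of_injective hinj,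
    Nat.card_eq_fintype_card, Fintype.card_fin]

end Fan

/-- The minimum number of bipartition-respecting chords whose addition makes the
even chordless cycle `C_{2n}` (`n ≥ 3`) chordal bipartite is exactly `n - 2`. -/
theorem min_chords_to_chordal_bipartite (n : ℕ) (hn : 3 ≤ n) :
    (∃ H : SimpleGraph (ZMod (2 * n)), cycleGraph n ≤ H ∧ RespectsBipartition H ∧
      Nat.card H.edgeSet = Nat.card (cycleGraph n).edgeSet + (n - 2) ∧
      ChordalBipartite H) ∧
    (∀ H : SimpleGraph (ZMod (2 * n)), cycleGraph n ≤ H → RespectsBipartition H →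
      ChordalBipartite H →
      Nat.card (cycleGraph n).edgeSet + (n - 2) ≤ Nat.card H.edgeSet) := by
  have : NeZero n := ⟨by omega⟩
  simp only [Nat.card_coe_set_eq]
  refine ⟨⟨fanGraph n, le_sup_left, fanGraph_respectsBipartition, ncard_edgeSet_fanGraph,
    fanGraph_chordalBipartite⟩, fun H hle hH hchordal => ?_⟩
  obtain ⟨w, hw⟩ := SimpleGraph.exists_isHamiltonianCycle_of_adj_add_one (by omega : 3 ≤ 2 * n)
    fun u => hle (cycleGraph_adj_add_one u)
  have hspan := hw.isCycle.three_mul_length_le hH.coloring hchordal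
  rw [hw.length_eq, ZMod.card, Set.eq_univ_of_forall (s := {z | z ∈ w.support}) hw.mem_support,
    Set.sym2_univ, Set.inter_univ] at hspan
  have := ncard_edgeSet_cycleGraph_le (n := n)
  omega
end
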